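/- arXiv:1509.01847 — 6 statements merged into one kernel-verified Lean document; each statement's English description precedes it below -/
import Mathlib

section
/- Let H be a group, K a subgroup of H, and φ an automorphism of H. Define L = {φ⁻¹(k)·k⁻¹ : k ∈ K ∩ Z(H)}. Then L is a normal subgroup of the centralizer C_H(K). -/
/-- The set `L = {φ⁻¹(k)·k⁻¹ : k ∈ K ∩ Z(H)}`. -/
def Lset {H : Type*} [Group H] (K : Subgroup H) (φ : H ≃* H) : Set H :=
  {x | ∃ k ∈ K ⊓ Subgroup.center H, x = φ.symm k * k⁻¹}

lemma symm_center {H : Type*} [Group H] (φ : H ≃* H) {k : H}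
    (hk : k ∈ Subgroup.center H) : φ.symm k ∈ Subgroup.center H := by
  rw [Subgroup.mem_center_iff] at hk ⊢
  intro g
  apply φ.injective
  simp only [map_mul, MulEquiv.apply_symm_apply]
  exact hk (φ g)

lemma Lset_central {H : Type*} [Group H] (K : Subgroup H) (φ : H ≃* H) {x : H}
    (hx : x ∈ Lset K φ) : x ∈ Subgroup.center H := by
  obtain ⟨k, ⟨-, hkc⟩, rfl⟩ := hx
  exact (Subgroup.center H).mul_mem (symm_center φ hkc) ((Subgroup.center H).inv_mem hkc)

/-- `L` is a normal subgroup of the centralizer `C_H(K)`: it is contained in the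
centralizer, is a subgroup, and is stable under conjugation by centralizer elements. -/
theorem Lset_normal_in_centralizer {H : Type*} [Group H] (K : Subgroup H) (φ : H ≃* H) :
    Lset K φ ⊆ (Subgroup.centralizer (K : Set H) : Set H) ∧
    (1 : H) ∈ Lset K φ ∧
    (∀ x ∈ Lset K φ, ∀ y ∈ Lset K φ, x * y ∈ Lset K φ) ∧
    (∀ x ∈ Lset K φ, x⁻¹ ∈ Lset K φ) ∧
    (∀ c ∈ Subgroup.centralizer (K : Set H), ∀ x ∈ Lset K φ, c⁻¹ * x * c ∈ Lset K φ) := by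
  refine ⟨?_, ?_, ?_, ?_, ?_⟩
  · intro x hx
    exact Subgroup.center_le_centralizer _ (Lset_central K φ hx)
  · exact ⟨1, (K ⊓ Subgroup.center H).one_mem, by simp⟩
  · rintro x ⟨k, hk, rfl⟩ y ⟨m, hm, rfl⟩
    refine ⟨k * m, (K ⊓ Subgroup.center H).mul_mem hk hm, ?_⟩
    have hc : k⁻¹ * φ.symm m = φ.symm m * k⁻¹ :=
      Subgroup.mem_center_iff.mp (symm_center φ hm.2) k⁻¹
    have hc2 : k⁻¹ * m⁻¹ = m⁻¹ * k⁻¹ :=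
      Subgroup.mem_center_iff.mp ((Subgroup.center H).inv_mem hm.2) k⁻¹
    rw [map_mul, mul_inv_rev]
    calc φ.symm k * k⁻¹ * (φ.symm m * m⁻¹)
        = φ.symm k * (k⁻¹ * φ.symm m) * m⁻¹ := by group
      _ = φ.symm k * (φ.symm m * k⁻¹) * m⁻¹ := by rw [hc]
      _ = φ.symm k * φ.symm m * (k⁻¹ * m⁻¹) := by group
      _ = φ.symm k * φ.symm m * (m⁻¹ * k⁻¹) := by rw [hc2]
  · rintro x ⟨k, hk, rfl⟩
    refine ⟨k⁻¹, (K ⊓ Subgroup.center H).inv_mem hk, ?_⟩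
    have hs := symm_center φ hk.2
    rw [mul_inv_rev, inv_inv, map_inv]
    exact Subgroup.mem_center_iff.mp ((Subgroup.center H).inv_mem hs) k
  · intro c _ x hx
    have hxc := Subgroup.mem_center_iff.mp (Lset_central K φ hx) c⁻¹
    rw [hxc, mul_assoc, inv_mul_cancel, mul_one]
    exact hx
end

section
/- Let H be a group, K ≤ H, φ ∈ Aut(H), and let A_K be as above. Then Inn(H) ∩ A_K = {γ_b : b ∈ N_H(K)}, i.e. the inner automorphisms lying in A_K are exactly those induced by elements of the normalizer of K. -/
/-! `γ_b = MulAut.conj b⁻¹` maps `K` onto itself exactly when `b` normalizes `K`, and the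
twisting condition of `A_K` holds for every inner automorphism, since
`φ ∘ γ_b = γ_a ∘ γ_b ∘ φ` with `a = b⁻¹ φ(b)`. -/

open Subgroup

theorem MulAut.forall_apply_eq_inv_mul_mul_iff {H : Type*} [Group H] (δ : MulAut H) (b : H) :
    (∀ x, δ x = b⁻¹ * x * b) ↔ δ = MulAut.conj b⁻¹ := by
  simp only [MulEquiv.ext_iff, MulAut.conj_apply, inv_inv]

theorem map_inv_mul_mul_eq_conj {G F : Type*} [Group G] [FunLike F G G] [MonoidHomClass F G G]
    (φ : F) (b x : G) :
    φ (b⁻¹ * x * b) = (b⁻¹ * φ b)⁻¹ * (b⁻¹ * φ x * b) * (b⁻¹ * φ b) := by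
  simp only [map_mul, map_inv]
  group

/-- The inner automorphisms of `H` lying in `A_K` are exactly those induced by
elements of the normalizer `N_H(K)`. -/
theorem inn_inter_AK {H : Type*} [Group H] (K : Subgroup H) (φ : H ≃* H) (δ : MulAut H) :
    ((∃ b : H, ∀ x : H, δ x = b⁻¹ * x * b) ∧
      K.map (δ : H →* H) = K ∧
      ∃ a : H, ∀ k ∈ K, φ (δ k) = a⁻¹ * δ (φ k) * a)
    ↔ ∃ b ∈ Subgroup.normalizer (K : Set H), ∀ x : H, δ x = b⁻¹ * x * b := by
  simp_rw [MulAut.forall_apply_eq_inv_mul_mul_iff]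
  constructor
  · rintro ⟨⟨b, rfl⟩, hK, -⟩
    exact ⟨b, inv_mem_iff.mp (mem_normalizer_iff_map_conj_eq.mpr hK), rfl⟩
  · rintro ⟨b, hb, rfl⟩
    refine ⟨⟨b, rfl⟩, mem_normalizer_iff_map_conj_eq.mp (inv_mem hb), b⁻¹ * φ b, fun k _ => ?_⟩
    simpa only [MulAut.conj_apply, inv_inv] using map_inv_mul_mul_eq_conj φ b k
end

section
/- Let G = ⟨H, t ; tkt⁻¹ = φ(k), k ∈ K⟩ be the HNN extension of a group H over the isomorphism K → φ(K) induced by φ ∈ Aut(H), with K ≤ H. For each d ∈ N_H(K), the assignment h ↦ h (for h ∈ H), t ↦ φ(d)·t·d⁻¹ extends to an automorphism φ_d of G. -/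
/-! Since `d` normalizes `K`, conjugating the relation `t k = φ(k) t` by `d` yields the
relation for `φ(d) t d⁻¹`, so `φ_d` (here `twist K φ d`) is a well-defined endomorphism.
These endomorphisms satisfy `φ_d ∘ φ_e = φ_{ed}` and `φ_1 = id`, so `φ_{d⁻¹}` inverts `φ_d`. -/

open HNNExtension

/-- The automorphism-induced HNN extension `H∗_(K,φ) = ⟨H, t ; tkt⁻¹ = φ(k), k ∈ K⟩`. -/
abbrev AutHNN (H : Type*) [Group H] (K : Subgroup H) (φ : H ≃* H) :=
  HNNExtension H K (K.map (φ : H →* H)) (φ.subgroupMap K)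

namespace AutHNN

variable {H : Type*} [Group H] (K : Subgroup H) (φ : H ≃* H)

theorem t_mul_of_of_mem {k : H} (hk : k ∈ K) :
    (t : AutHNN H K φ) * of k = of (φ k) * t :=
  t_mul_of (A := K) (B := K.map (φ : H →* H)) (φ := φ.subgroupMap K) ⟨k, hk⟩

theorem twisted_t_mul_of {d : H} (hd : d ∈ Subgroup.normalizer (K : Set H)) (k : K) :
    (of (φ d) * t * (of d)⁻¹ : AutHNN H K φ) * of (k : H) =
      of (φ k) * (of (φ d) * t * (of d)⁻¹) := by
  have hconj : d⁻¹ * k * d ∈ K := (Subgroup.mem_set_normalizer_iff''.mp hd k).mp k.2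
  calc (of (φ d) * t * (of d)⁻¹ : AutHNN H K φ) * of (k : H)
      = of (φ d) * (t * of (d⁻¹ * k * d)) * (of d)⁻¹ := by
        simp only [map_mul, map_inv, mul_assoc, mul_inv_cancel, mul_one]
    _ = of (φ d) * (of (φ (d⁻¹ * k * d)) * t) * (of d)⁻¹ := by rw [t_mul_of_of_mem K φ hconj]
    _ = of (φ k) * (of (φ d) * t * (of d)⁻¹) := by
        simp only [map_mul, map_inv, mul_assoc, mul_inv_cancel_left]

noncomputable def twist (d : H) (hd : d ∈ Subgroup.normalizer (K : Set H)) :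
    AutHNN H K φ →* AutHNN H K φ :=
  lift of (of (φ d) * t * (of d)⁻¹) (twisted_t_mul_of K φ hd)

variable {K φ}

@[simp]
theorem twist_of {d : H} (hd : d ∈ Subgroup.normalizer (K : Set H)) (h : H) :
    twist K φ d hd (of h) = of h :=
  lift_of _ _ _ h

@[simp]
theorem twist_t {d : H} (hd : d ∈ Subgroup.normalizer (K : Set H)) :
    twist K φ d hd t = of (φ d) * t * (of d)⁻¹ :=
  lift_t _ _ _

theorem twist_one : twist K φ 1 (Subgroup.one_mem _) = MonoidHom.id _ := by
  ext <;> simp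

theorem twist_comp_twist {d e : H} (hd : d ∈ Subgroup.normalizer (K : Set H))
    (he : e ∈ Subgroup.normalizer (K : Set H)) :
    (twist K φ d hd).comp (twist K φ e he) = twist K φ (e * d) (Subgroup.mul_mem _ he hd) := by
  ext <;> simp [mul_assoc]

end AutHNN

open AutHNN in
/-- For `d ∈ N_H(K)`, the assignment `h ↦ h`, `t ↦ φ(d)·t·d⁻¹` extends to an
automorphism of `G = H∗_(K,φ)`. -/
theorem varphi_d_is_automorphism {H : Type*} [Group H] (K : Subgroup H) (φ : H ≃* H)
    (d : H) (hd : d ∈ Subgroup.normalizer (K : Set H)) :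
    ∃ ψ : AutHNN H K φ ≃* AutHNN H K φ,
      (∀ h : H, ψ (of h) = of h) ∧ ψ t = of (φ d) * t * (of d)⁻¹ := by
  have hd' : d⁻¹ ∈ Subgroup.normalizer (K : Set H) := Subgroup.inv_mem _ hd
  have left_inv : (twist K φ d⁻¹ hd').comp (twist K φ d hd) = MonoidHom.id _ := by
    rw [twist_comp_twist, ← twist_one]; simp only [mul_inv_cancel]
  have right_inv : (twist K φ d hd).comp (twist K φ d⁻¹ hd') = MonoidHom.id _ := by
    rw [twist_comp_twist, ← twist_one]; simp only [inv_mul_cancel]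
  exact ⟨(twist K φ d hd).toMulEquiv _ left_inv right_inv, twist_of hd, twist_t hd⟩
end

section
/- Let G = H∗_(K,φ) with K a proper subgroup of H. Suppose g ∈ G and x, y ∈ H satisfy g⁻¹(yt)g = x⁻¹φ(x)t and g⁻¹hg = x⁻¹hx for all h ∈ H. Then g ∈ K. -/
/-!
Put `z = g * (of x)⁻¹`. The second hypothesis says that `z` centralizes `H`. When `K` and `φ K` are
both proper this forces `z ∈ H`: if a reduced word for `z` contained `t`, then multiplying by a
suitable conjugate of an element outside the relevant subgroup on the left (absorbed by the head)
and on the right (absorbed by the last letter) would give two reduced words for the same element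
whose heads lie in different cosets. Hence `g ∈ H`, the first hypothesis gives `t g t⁻¹ ∈ H`,
and Britton's lemma yields `g ∈ K`.
-/

open HNNExtension

open HNNExtension.NormalWord

namespace HNNExtension

variable {G : Type*} [Group G] {A B : Subgroup G} {φ : A ≃* B}

theorem toSubgroup_ne_top (hA : A ≠ ⊤) (hB : B ≠ ⊤) (u : ℤˣ) : toSubgroup A B u ≠ ⊤ := by
  rcases Int.units_eq_one_or u with rfl | rfl <;> assumption

theorem t_mul_of_mul_inv_t_mem_range_iff (a : G) :
    t * of a * t⁻¹ ∈ (of : G →* HNNExtension G A B φ).range ↔ a ∈ A := by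
  refine ⟨fun h => ?_, fun ha => ⟨φ ⟨a, ha⟩, ?_⟩⟩
  · by_contra ha
    let w : ReducedWord G A B := ⟨1, [(1, a), (-1, 1)], List.isChain_pair.2 fun h' => absurd h' ha⟩
    have hw : w.prod φ = t * of a * t⁻¹ := by simp [ReducedWord.prod, w, mul_assoc]
    simpa [w] using ReducedWord.toList_eq_nil_of_mem_of_range φ w (hw ▸ h)
  · exact (mul_inv_eq_of_eq_mul (t_mul_of ⟨a, ha⟩)).symm

namespace NormalWord.ReducedWord

theorem exists_prod_eq (z : HNNExtension G A B φ) : ∃ w : ReducedWord G A B, w.prod φ = z := by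
  obtain ⟨d⟩ := TransversalPair.nonempty G A B
  exact ⟨(z • NormalWord.empty : NormalWord d).toReducedWord, by simp [prod_smul]⟩

theorem prod_mk_mul_head (g : G) (w : ReducedWord G A B) :
    (⟨g * w.head, w.toList, w.chain⟩ : ReducedWord G A B).prod φ = of g * w.prod φ := by
  simp [ReducedWord.prod, mul_assoc]

theorem exists_head_eq_prod_eq_mul_of (w : ReducedWord G A B) (hw : w.toList ≠ []) (g : G) :
    ∃ w' : ReducedWord G A B, w'.head = w.head ∧ w'.prod φ = w.prod φ * of g := by
  obtain ⟨L, ⟨u, a⟩, hL⟩ : ∃ L b, w.toList = L ++ [b] :=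
    ⟨_, _, (List.dropLast_append_getLast hw).symm⟩
  have hchain := w.chain
  rw [hL, List.isChain_append] at hchain
  refine ⟨⟨w.head, L ++ [(u, a * g)], List.isChain_append.2 ⟨hchain.1, List.isChain_singleton _,
    fun x hx _ hy => ?_⟩⟩, rfl, ?_⟩
  · cases Option.mem_some_iff.1 hy
    exact hchain.2.2 x hx (u, a) rfl
  · simp [ReducedWord.prod, hL, mul_assoc]

end NormalWord.ReducedWord

theorem centralizer_range_of_le_range (hA : A ≠ ⊤) (hB : B ≠ ⊤) :
    Subgroup.centralizer ((of : G →* HNNExtension G A B φ).range : Set (HNNExtension G A B φ)) ≤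
      (of : G →* HNNExtension G A B φ).range := by
  intro z hz
  obtain ⟨w, rfl⟩ := ReducedWord.exists_prod_eq z
  by_cases hw : w.toList = []
  · exact ⟨w.head, by simp [ReducedWord.prod, hw]⟩
  obtain ⟨u, hu⟩ : ∃ u, u ∈ w.toList.head?.map Prod.fst := by
    cases h : w.toList with
    | nil => exact absurd h hw
    | cons p _ => exact ⟨p.1, by simp⟩
  obtain ⟨s, -, hs⟩ := SetLike.exists_of_lt (toSubgroup_ne_top hA hB (-u)).lt_top
  set g := w.head * s⁻¹ * w.head⁻¹
  obtain ⟨w', hhead, hprod⟩ := w.exists_head_eq_prod_eq_mul_of hw g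
  have hcomm : (⟨g * w.head, w.toList, w.chain⟩ : ReducedWord G A B).prod φ = w'.prod φ := by
    rw [ReducedWord.prod_mk_mul_head, hprod, Subgroup.mem_centralizer_iff.1 hz _ ⟨g, rfl⟩]
  have hcoset := (ReducedWord.map_fst_eq_and_of_prod_eq φ hcomm).2 u hu
  exact absurd (by simpa [g, hhead] using hcoset) hs

end HNNExtension

/-- Technical conjugation lemma: if `g ∈ G` and `x, y ∈ H` satisfy
`g⁻¹(yt)g = x⁻¹φ(x)t` and `g⁻¹hg = x⁻¹hx` for all `h ∈ H`, then `g ∈ K`. -/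
theorem conj_lemma_mem_K {H : Type*} [Group H] (K : Subgroup H) (φ : H ≃* H)
    (hK : K ≠ ⊤) (g : AutHNN H K φ) (x y : H)
    (h1 : g⁻¹ * (of y * t) * g = of (x⁻¹ * φ x) * t)
    (h2 : ∀ h : H, g⁻¹ * of h * g = of (x⁻¹ * h * x)) :
    ∃ k ∈ K, of k = g := by
  have hφK : K.map (φ : H →* H) ≠ ⊤ := by
    rwa [Ne, ← Subgroup.map_equiv_top φ, (Subgroup.map_injective φ.injective).eq_iff]
  obtain ⟨c, hc⟩ : g * (of x)⁻¹ ∈ (of : H →* AutHNN H K φ).range := by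
    refine centralizer_range_of_le_range hK hφK (Subgroup.mem_centralizer_iff.2 ?_)
    rintro _ ⟨h, rfl⟩
    calc of h * (g * (of x)⁻¹) = g * (g⁻¹ * of h * g) * (of x)⁻¹ := by group
      _ = g * (of x)⁻¹ * of h := by rw [h2, map_mul, map_mul, map_inv]; group
  have hg : g = of (c * x) := by rw [map_mul, hc, inv_mul_cancel_right]
  have hmem : t * of (c * x) * t⁻¹ ∈ (of : H →* AutHNN H K φ).range := by
    refine ⟨y⁻¹ * c * φ x, ?_⟩
    calc of (y⁻¹ * c * φ x) = (of y)⁻¹ * g * of (x⁻¹ * φ x) := by simp [hg, mul_assoc]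
      _ = (of y)⁻¹ * g * (g⁻¹ * (of y * t) * g) * t⁻¹ := by
        rw [h1, ← mul_assoc, mul_inv_cancel_right]
      _ = t * of (c * x) * t⁻¹ := by rw [← hg]; group
  exact ⟨c * x, (t_mul_of_mul_inv_t_mem_range_iff _).1 hmem, hg.symm⟩
end

section
/- Let G = H∗_(K,φ) be an automorphism-induced HNN extension. For every g ∈ G there exist i ∈ ℤ and a ∈ H (depending only on g) such that for all b, c ∈ H with g⁻¹bg = c, one has c = a⁻¹·φ^i(b)·a. -/
open HNNExtension

/-- For every `g ∈ G = H∗_(K,φ)` there exist `i ∈ ℤ` and `a ∈ H` (depending only on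
`g`) such that whenever `b, c ∈ H` satisfy `g⁻¹bg = c`, one has `c = a⁻¹·φ^i(b)·a`. -/
theorem conj_into_H_form {H : Type*} [Group H] (K : Subgroup H) (φ : H ≃* H)
    (g : AutHNN H K φ) :
    ∃ (i : ℤ) (a : H), ∀ b c : H,
      g⁻¹ * of b * g = of c → c = a⁻¹ * (((φ : MulAut H) ^ i) b) * a := by
  set ρ : Multiplicative ℤ →* MulAut H := zpowersHom (MulAut H) (φ : MulAut H) with hρ
  have hx : ∀ a : K, (SemidirectProduct.inr (Multiplicative.ofAdd 1) : H ⋊[ρ] Multiplicative ℤ) *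
      SemidirectProduct.inl (a : H) =
      SemidirectProduct.inl ((φ.subgroupMap K a : (K.map (φ : H →* H))) : H) *
      SemidirectProduct.inr (Multiplicative.ofAdd 1) := by
    intro a
    ext
    · simp [SemidirectProduct.mul_left, hρ, MulEquiv.coe_subgroupMap_apply]
    · simp [SemidirectProduct.mul_right]
  set ψ : AutHNN H K φ →* H ⋊[ρ] Multiplicative ℤ :=
    HNNExtension.lift SemidirectProduct.inl (SemidirectProduct.inr (Multiplicative.ofAdd 1)) hx
    with hψ
  refine ⟨-(Multiplicative.toAdd (ψ g).right), ((φ : MulAut H) ^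
    (-(Multiplicative.toAdd (ψ g).right))) (ψ g).left, ?_⟩
  intro b c hbc
  have h2 := congrArg (fun x => (ψ x).left) hbc
  simp only [map_mul, map_inv, hψ, HNNExtension.lift_of] at h2
  rw [SemidirectProduct.mul_left, SemidirectProduct.mul_left, SemidirectProduct.inv_left,
    SemidirectProduct.left_inl, SemidirectProduct.mul_right, SemidirectProduct.inv_right,
    SemidirectProduct.right_inl, SemidirectProduct.left_inl] at h2
  rw [← h2]
  simp [← hψ, hρ, zpowersHom_apply, toAdd_inv, zpow_neg]
end

section
/- Let G = H∗_(K,φ) with K < H, and suppose a ∈ φ(K) satisfies a⁻¹Ka ⊊ K ⊊ φ(K). Then a ∉ K, and the element t²at⁻¹φ(a)⁻¹ of G is a reduced word (hence not equal to any element of the form ht^{±1} with h ∈ H times fewer t-letters); in particular t²at⁻¹φ(a)⁻¹ ∉ H·t ∪ H·t⁻¹ ∪ H. -/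
open HNNExtension
open HNNExtension.NormalWord

theorem aux_not_mem {H : Type*} [Group H] (K : Subgroup H) (a : H)
    (h1 : K.map ((MulAut.conj a⁻¹ : MulAut H) : H →* H) < K) : a ∉ K := by
  intro haK
  refine h1.ne ?_
  apply le_antisymm h1.le
  intro k hk
  refine ⟨a * k * a⁻¹, K.mul_mem (K.mul_mem haK hk) (K.inv_mem haK), ?_⟩
  simp [MulAut.conj, mul_assoc]

/-- If `a ∈ φ(K)` satisfies `a⁻¹Ka ⊊ K ⊊ φ(K)`, then `a ∉ K`, and the element
`t²at⁻¹φ(a)⁻¹` of `G` is reduced: in particular it lies in none of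
`H·t`, `H·t⁻¹`, `H`. -/
theorem reduced_word_not_short {H : Type*} [Group H] (K : Subgroup H) (φ : H ≃* H)
    (a : H) (ha : a ∈ K.map (φ : H →* H))
    (h1 : K.map ((MulAut.conj a⁻¹ : MulAut H) : H →* H) < K)
    (h2 : K < K.map (φ : H →* H)) :
    a ∉ K ∧
    (∀ h : H, (t * t * of a * t⁻¹ * (of (φ a))⁻¹ : AutHNN H K φ) ≠ of h * t) ∧
    (∀ h : H, (t * t * of a * t⁻¹ * (of (φ a))⁻¹ : AutHNN H K φ) ≠ of h * t⁻¹) ∧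
    (∀ h : H, (t * t * of a * t⁻¹ * (of (φ a))⁻¹ : AutHNN H K φ) ≠ of h) := by
  have haK : a ∉ K := aux_not_mem K a h1
  set B := K.map (φ : H →* H) with hB
  let w₁ : ReducedWord H K B :=
    { head := 1
      toList := [(1, 1), (1, a), (-1, (φ a)⁻¹)]
      chain := by
        refine List.isChain_cons_cons.2 ⟨fun _ => rfl, List.isChain_cons_cons.2 ⟨fun h => ?_, List.isChain_singleton _⟩⟩
        exact absurd h haK }
  have hw₁ : w₁.prod (φ.subgroupMap K) = (t * t * of a * t⁻¹ * (of (φ a))⁻¹ : AutHNN H K φ) := by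
    simp [ReducedWord.prod, w₁, mul_assoc]
  refine ⟨haK, ?_, ?_, ?_⟩
  · intro h heq
    let w₂ : ReducedWord H K B :=
      { head := h, toList := [(1, 1)], chain := List.isChain_singleton _ }
    have hw₂ : w₂.prod (φ.subgroupMap K) = (of h * t : AutHNN H K φ) := by
      simp [ReducedWord.prod, w₂]
    have := (ReducedWord.map_fst_eq_and_of_prod_eq (φ.subgroupMap K)
      (hw₁.trans (heq.trans hw₂.symm))).1
    simp [w₁, w₂] at this
  · intro h heq
    let w₂ : ReducedWord H K B :=
      { head := h, toList := [(-1, 1)], chain := List.isChain_singleton _ }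
    have hw₂ : w₂.prod (φ.subgroupMap K) = (of h * t⁻¹ : AutHNN H K φ) := by
      simp [ReducedWord.prod, w₂]
    have := (ReducedWord.map_fst_eq_and_of_prod_eq (φ.subgroupMap K)
      (hw₁.trans (heq.trans hw₂.symm))).1
    simp [w₁, w₂] at this
  · intro h heq
    let w₂ : ReducedWord H K B :=
      { head := h, toList := [], chain := List.isChain_nil }
    have hw₂ : w₂.prod (φ.subgroupMap K) = (of h : AutHNN H K φ) := by
      simp [ReducedWord.prod, w₂]
    have := (ReducedWord.map_fst_eq_and_of_prod_eq (φ.subgroupMap K)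
      (hw₁.trans (heq.trans hw₂.symm))).1
    simp [w₁, w₂] at this
end
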